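/- (Lemma 1 of the paper, algebraic form.) Let C be a chain complex of modules over ZMod 2 and φ_p : C_p → C_{p+1} a family of linear maps satisfying the chain-homotopy property φ_p ∘ ∂_{p+1} ∘ φ_p = φ_p and the nilpotency condition φ_{p+1} ∘ φ_p = 0, and set π_p = id + φ_{p-1} ∘ ∂_p + ∂_{p+1} ∘ φ_p. Let D be the chain complex whose p-th module is the range of π_p (a submodule of C_p) with differentials obtained by restricting ∂. Then the corestriction π' : C → D of π and the inclusion ι : D → C are chain maps satisfying π' ∘ ι = id_D and ι ∘ π' chain homotopic to id_C; consequently C and D have isomorphic homology in every degree. -/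

import Mathlib

/-!
Over `ZMod 2` we have `π = id - N` with `N = φ∂ + ∂φ`. The chain-homotopy property makes `φ∂` and
`∂φ` idempotent, while `∂∂ = 0` and `φφ = 0` make them orthogonal, so `N` and hence `π` are
idempotent; `∂∂ = 0` alone makes `N`, hence `π`, commute with `∂`. Thus `π` is a projection onto
the subcomplex `D` and `id - ι ∘ π' = N` is null-homotopic via `φ`. On cycles `ι ∘ π'` therefore
differs from the identity by a boundary, so `π'` and `ι` induce mutually inverse maps in homology.
-/

section HomologyOfRetract

variable {R M₂ M₁ M₀ : Type*} [Ring R]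
  [AddCommGroup M₂] [Module R M₂] [AddCommGroup M₁] [Module R M₁] [AddCommGroup M₀] [Module R M₀]
  {d₁ : M₂ →ₗ[R] M₁} {d₀ : M₁ →ₗ[R] M₀}
  {S₂ : Submodule R M₂} {S₁ : Submodule R M₁} {S₀ : Submodule R M₀}
  {d₁' : S₂ →ₗ[R] S₁} {d₀' : S₁ →ₗ[R] S₀}
  {r₂ : M₂ →ₗ[R] S₂} {r₁ : M₁ →ₗ[R] S₁} {r₀ : M₀ →ₗ[R] S₀}

open LinearMap (ker range mem_ker)

def homologyEquivOfRetract
    (hd₁' : d₁ ∘ₗ S₂.subtype = S₁.subtype ∘ₗ d₁') (hd₀' : d₀ ∘ₗ S₁.subtype = S₀.subtype ∘ₗ d₀')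
    (hr₂ : d₁' ∘ₗ r₂ = r₁ ∘ₗ d₁) (hr₁ : d₀' ∘ₗ r₁ = r₀ ∘ₗ d₀)
    (hr₁_section : r₁ ∘ₗ S₁.subtype = LinearMap.id)
    (hhomotopic : ∃ (h₁ : M₁ →ₗ[R] M₂) (h₀ : M₀ →ₗ[R] M₁),
      LinearMap.id - S₁.subtype ∘ₗ r₁ = d₁ ∘ₗ h₁ + h₀ ∘ₗ d₀) :
    (ker d₀ ⧸ (range d₁).comap (ker d₀).subtype) ≃ₗ[R]
      (ker d₀' ⧸ (range d₁').comap (ker d₀').subtype) :=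
  have hr₁_cycle (x : M₁) (hx : x ∈ ker d₀) : r₁ x ∈ ker d₀' := by
    rw [mem_ker] at hx ⊢
    rw [← LinearMap.comp_apply, hr₁, LinearMap.comp_apply, hx, map_zero]
  have hι_cycle (y : S₁) (hy : y ∈ ker d₀') : S₁.subtype y ∈ ker d₀ := by
    rw [mem_ker] at hy ⊢
    rw [← LinearMap.comp_apply, hd₀', LinearMap.comp_apply, hy, map_zero]
  have hr₁_boundary : (range d₁).comap (ker d₀).subtype ≤
      ((range d₁').comap (ker d₀').subtype).comap (r₁.restrict hr₁_cycle) := by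
    rintro x ⟨y, hy⟩
    exact ⟨r₂ y, (LinearMap.congr_fun hr₂ y).trans (congrArg r₁ hy)⟩
  have hι_boundary : (range d₁').comap (ker d₀').subtype ≤
      ((range d₁).comap (ker d₀).subtype).comap (S₁.subtype.restrict hι_cycle) := by
    rintro y ⟨z, hz⟩
    exact ⟨z, (LinearMap.congr_fun hd₁' z).trans (congrArg Subtype.val hz)⟩
  LinearEquiv.ofLinearMap (Submodule.mapQ _ _ _ hr₁_boundary) (Submodule.mapQ _ _ _ hι_boundary)
    (by
      refine Submodule.linearMap_qext _ (LinearMap.ext fun y => ?_)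
      simp only [LinearMap.comp_apply, Submodule.mkQ_apply, Submodule.mapQ_apply,
        LinearMap.id_apply]
      congr 1
      ext
      exact congrArg Subtype.val (LinearMap.congr_fun hr₁_section y))
    (by
      obtain ⟨h₁, h₀, hhtpy⟩ := hhomotopic
      refine Submodule.linearMap_qext _ (LinearMap.ext fun x => ?_)
      simp only [LinearMap.comp_apply, Submodule.mkQ_apply, Submodule.mapQ_apply,
        LinearMap.id_apply]
      rw [Submodule.Quotient.eq]
      have hx := LinearMap.congr_fun hhtpy x
      simp only [LinearMap.sub_apply, LinearMap.id_apply, LinearMap.comp_apply,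
        LinearMap.add_apply, Submodule.subtype_apply, mem_ker.mp x.2, map_zero, add_zero] at hx
      refine ⟨-h₁ x, ?_⟩
      rw [map_neg, ← hx, neg_sub]
      rfl)

end HomologyOfRetract

section Corestriction

variable {R M N : Type*} [Semiring R] [AddCommMonoid M] [Module R M] [AddCommMonoid N] [Module R N]

theorem corestrict_comp_subtype_of_isIdempotentElem {P : M →ₗ[R] M} (hP : IsIdempotentElem P)
    {P' : M →ₗ[R] LinearMap.range P} (hP' : ∀ x, (P' x : M) = P x) :
    P' ∘ₗ (LinearMap.range P).subtype = LinearMap.id :=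
  LinearMap.ext fun x => Subtype.ext <|
    (hP' x).trans ((LinearMap.IsIdempotentElem.mem_range_iff hP).mp x.2)

theorem restrict_comp_corestrict_of_comp_eq {P : M →ₗ[R] M} {Q : N →ₗ[R] N} {f : M →ₗ[R] N}
    (hf : f ∘ₗ P = Q ∘ₗ f) {f' : LinearMap.range P →ₗ[R] LinearMap.range Q}
    (hf' : ∀ x, (f' x : N) = f x) {P' : M →ₗ[R] LinearMap.range P} (hP' : ∀ x, (P' x : M) = P x)
    {Q' : N →ₗ[R] LinearMap.range Q} (hQ' : ∀ y, (Q' y : N) = Q y) :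
    f' ∘ₗ P' = Q' ∘ₗ f :=
  LinearMap.ext fun x => Subtype.ext <| by
    rw [LinearMap.comp_apply, hf', hP', ← LinearMap.comp_apply, hf, LinearMap.comp_apply,
      LinearMap.comp_apply, hQ']

end Corestriction

theorem neg_eq_self_of_zmod_two {M : Type*} [AddCommGroup M] [Module (ZMod 2) M] (x : M) :
    -x = x := by
  rw [← neg_one_smul (ZMod 2) x, show (-1 : ZMod 2) = 1 from rfl, one_smul]

section NullHomotopic

variable {R : Type*} [Ring R] {C : ℤ → Type*} [∀ p, AddCommGroup (C p)] [∀ p, Module R (C p)]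
  (d : ∀ p : ℤ, C (p + 1) →ₗ[R] C p) (φ : ∀ p : ℤ, C p →ₗ[R] C (p + 1))

def nullHomotopicMap (p : ℤ) : C (p + 1) →ₗ[R] C (p + 1) :=
  φ p ∘ₗ d p + d (p + 1) ∘ₗ φ (p + 1)

variable {d φ}

theorem isIdempotentElem_nullHomotopicMap (hdd : ∀ p, d p ∘ₗ d (p + 1) = 0)
    (hφdφ : ∀ p, φ p ∘ₗ d p ∘ₗ φ p = φ p) (hφφ : ∀ p, φ (p + 1) ∘ₗ φ p = 0) (p : ℤ) :
    IsIdempotentElem (nullHomotopicMap d φ p) := by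
  have hdd' p x := LinearMap.congr_fun (hdd p) x
  have hφdφ' p x := LinearMap.congr_fun (hφdφ p) x
  have hφφ' p x := LinearMap.congr_fun (hφφ p) x
  simp only [LinearMap.comp_apply, LinearMap.zero_apply] at hdd' hφdφ' hφφ'
  ext x
  simp only [Module.End.mul_apply, nullHomotopicMap, LinearMap.add_apply, LinearMap.comp_apply,
    map_add, hdd', hφdφ', hφφ', map_zero, add_zero, zero_add]

theorem comp_nullHomotopicMap (hdd : ∀ p, d p ∘ₗ d (p + 1) = 0) (p : ℤ) :
    d (p + 1) ∘ₗ nullHomotopicMap d φ (p + 1) = nullHomotopicMap d φ p ∘ₗ d (p + 1) := by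
  have hdd' p x := LinearMap.congr_fun (hdd p) x
  simp only [LinearMap.comp_apply, LinearMap.zero_apply] at hdd'
  ext x
  simp only [nullHomotopicMap, LinearMap.add_apply, LinearMap.comp_apply, map_add, hdd', map_zero,
    add_zero, zero_add]

end NullHomotopic

/-- Lemma 1, algebraic form: with `φ` satisfying the chain-homotopy
property and nilpotency, `π_p = id + φ_{p-1} ∘ ∂_p + ∂_{p+1} ∘ φ_p`, and `D` the
subcomplex of ranges of the `π_p` (with restricted differentials `d'`), the corestriction
`π' : C → D` and the inclusion `ι : D → C` are chain maps with `π' ∘ ι = id_D` and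
`ι ∘ π'` chain homotopic to `id_C`; consequently `C` and `D` have isomorphic homology in
every degree. -/
theorem integral_operator_deformation_retract
    (C : ℤ → Type) [∀ p, AddCommGroup (C p)] [∀ p, Module (ZMod 2) (C p)]
    (d : ∀ p : ℤ, C (p + 1) →ₗ[ZMod 2] C p)
    (hdd : ∀ p : ℤ, (d p).comp (d (p + 1)) = 0)
    (φ : ∀ p : ℤ, C p →ₗ[ZMod 2] C (p + 1))
    (hhomotopy : ∀ p : ℤ, (φ p).comp ((d p).comp (φ p)) = φ p)
    (hnilpotent : ∀ p : ℤ, (φ (p + 1)).comp (φ p) = 0)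
    (π : ∀ p : ℤ, C p →ₗ[ZMod 2] C p)
    (hπ : ∀ p : ℤ, π (p + 1) =
      LinearMap.id + (φ p).comp (d p) + (d (p + 1)).comp (φ (p + 1)))
    -- the subcomplex `D` of ranges of the `π_p`, with differentials `d'` restricting `d`
    (d' : ∀ p : ℤ, LinearMap.range (π (p + 1)) →ₗ[ZMod 2] LinearMap.range (π p))
    (hd' : ∀ (p : ℤ) (x : LinearMap.range (π (p + 1))),
      ((d' p x : C p)) = d p (x : C (p + 1)))
    -- the corestriction `π'` of `π` to `D`
    (π' : ∀ p : ℤ, C p →ₗ[ZMod 2] LinearMap.range (π p))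
    (hπ' : ∀ (p : ℤ) (x : C p), ((π' p x : C p)) = π p x) :
    -- the inclusion ι is a chain map
    (∀ p : ℤ, (d p).comp (LinearMap.range (π (p + 1))).subtype
      = ((LinearMap.range (π p)).subtype).comp (d' p)) ∧
    -- the corestriction π' is a chain map
    (∀ p : ℤ, (d' p).comp (π' (p + 1)) = (π' p).comp (d p)) ∧
    -- π' ∘ ι = id_D
    (∀ p : ℤ, (π' p).comp (LinearMap.range (π p)).subtype = LinearMap.id) ∧
    -- ι ∘ π' is chain homotopic to id_C
    (∃ h : ∀ p : ℤ, C p →ₗ[ZMod 2] C (p + 1), ∀ p : ℤ,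
      LinearMap.id - ((LinearMap.range (π (p + 1))).subtype).comp (π' (p + 1))
        = (d (p + 1)).comp (h (p + 1)) + (h p).comp (d p)) ∧
    -- C and D have isomorphic homology in every degree
    (∀ p : ℤ, Nonempty (
      (↥(LinearMap.ker (d p)) ⧸
        (LinearMap.range (d (p + 1))).comap (LinearMap.ker (d p)).subtype)
      ≃ₗ[ZMod 2]
      (↥(LinearMap.ker (d' p)) ⧸
        (LinearMap.range (d' (p + 1))).comap (LinearMap.ker (d' p)).subtype))) := by
  have hπ_eq (p : ℤ) : π (p + 1) = LinearMap.id - nullHomotopicMap d φ p := by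
    rw [hπ p, add_assoc, sub_eq_add_neg, neg_eq_self_of_zmod_two]
    rfl
  have hπ_idem (p : ℤ) : IsIdempotentElem (π p) := by
    obtain ⟨q, rfl⟩ : ∃ q, p = q + 1 := ⟨p - 1, by ring⟩
    rw [hπ_eq, ← Module.End.one_eq_id]
    exact (isIdempotentElem_nullHomotopicMap hdd hhomotopy hnilpotent q).one_sub
  have hπ_chain (p : ℤ) : d p ∘ₗ π (p + 1) = π p ∘ₗ d p := by
    obtain ⟨q, rfl⟩ : ∃ q, p = q + 1 := ⟨p - 1, by ring⟩
    rw [hπ_eq, hπ_eq, LinearMap.comp_sub, LinearMap.sub_comp, comp_nullHomotopicMap hdd,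
      LinearMap.comp_id, LinearMap.id_comp]
  have hι_chain (p : ℤ) : d p ∘ₗ (LinearMap.range (π (p + 1))).subtype
      = (LinearMap.range (π p)).subtype ∘ₗ d' p :=
    LinearMap.ext fun x => (hd' p x).symm
  have hπ'_chain (p : ℤ) : d' p ∘ₗ π' (p + 1) = π' p ∘ₗ d p :=
    restrict_comp_corestrict_of_comp_eq (hπ_chain p) (hd' p) (hπ' (p + 1)) (hπ' p)
  have hπ'_section (p : ℤ) : π' p ∘ₗ (LinearMap.range (π p)).subtype = LinearMap.id :=
    corestrict_comp_subtype_of_isIdempotentElem (hπ_idem p) (hπ' p)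
  have hφ_homotopy (p : ℤ) : LinearMap.id - (LinearMap.range (π (p + 1))).subtype ∘ₗ π' (p + 1)
      = d (p + 1) ∘ₗ φ (p + 1) + φ p ∘ₗ d p := by
    rw [show _ ∘ₗ π' (p + 1) = π (p + 1) from LinearMap.ext (hπ' (p + 1)), hπ_eq, sub_sub_cancel]
    exact add_comm _ _
  exact ⟨hι_chain, hπ'_chain, hπ'_section, ⟨φ, hφ_homotopy⟩, fun p =>
    ⟨homologyEquivOfRetract (hι_chain (p + 1)) (hι_chain p) (hπ'_chain (p + 1)) (hπ'_chain p)
      (hπ'_section (p + 1)) ⟨_, _, hφ_homotopy p⟩⟩⟩
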